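/- arXiv:0704.2282 — 2 statements merged into one kernel-verified Lean document; each statement's English description precedes it below -/
import Mathlib

section
/- Let G be an omniconjugated graph, let p be a port of G with unique incident edge {p, v}, and let w be a node not among the nodes of G. Then the graph G' = (G \ {{p, v}}) ∪ { {p, w}, {w, v} }, obtained by replacing the edge to the port p by two edges through the new node w of degree 2, is omniconjugated. -/
open scoped symmDiff

namespace Kekule

abbrev Node := ℕ
abbrev Graph := Finset (Finset Node)

/-- `G` is a graph: every edge is a 2-element set of nodes. -/
def IsGraph (G : Graph) : Prop := ∀ e ∈ G, e.card = 2

/-- The nodes of a graph: the elements of its edges. -/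
def nodes (G : Graph) : Finset Node := G.biUnion id

/-- The number of edges of `G` containing `v`. -/
def deg (G : Graph) (v : Node) : ℕ := (G.filter (fun e => v ∈ e)).card

/-- A port is a node contained in exactly one edge. -/
def ports (G : Graph) : Finset Node := (nodes G).filter (fun v => deg G v = 1)

/-- An internal node is a node that is not a port. -/
def internal (G : Graph) : Finset Node := (nodes G).filter (fun v => deg G v ≠ 1)

/-- A Kekulé state of `G`: a subgraph `W ⊆ G` such that every internal node
of `G` lies in exactly one edge of `W`. -/
def IsKekule (G W : Graph) : Prop := W ⊆ G ∧ ∀ v ∈ internal G, deg W v = 1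

/-- A curve in `G`: a subgraph `C ⊆ G` such that every node of `C` that is
internal in `G` lies in exactly two edges of `C`. -/
def IsCurve (G C : Graph) : Prop :=
  C ⊆ G ∧ ∀ v ∈ nodes C, v ∈ internal G → deg C v = 2

/-- `(C, W)` is an alternating curve in `G`: both are subgraphs of `G`,
`C` is a curve in `G`, and `W ∩ C` is a Kekulé state of `C`. -/
def IsAlternating (G C W : Graph) : Prop :=
  W ⊆ G ∧ IsCurve G C ∧ IsKekule C (W ∩ C)

/-- `W|P`: the set of ports in `P` that lie in some edge of `W`. -/
def rest (W : Graph) (P : Finset Node) : Finset Node := P ∩ nodes W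

/-- The set of Kekulé port assignments of `G`. -/
def KP (G : Graph) : Set (Finset Node) :=
  {g | ∃ W, IsKekule G W ∧ rest W (ports G) = g}

/-- A cell `K` over `P` is a Kekulé cell if it is the set of Kekulé port
assignments of some graph with port set `P`. -/
def IsKekuleCell (P : Finset Node) (K : Set (Finset Node)) : Prop :=
  ∃ G, IsGraph G ∧ ports G = P ∧ KP G = K

/-- A channel: a 2-element subset of `P`. -/
def IsChannel (P : Finset Node) (c : Finset Node) : Prop := c ⊆ P ∧ c.card = 2

/-- A port `p` is flexible for a cell `K`. -/
def Flexible (K : Set (Finset Node)) (p : Node) : Prop :=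
  ∃ g ∈ K, ∃ g' ∈ K, p ∈ g ∧ p ∉ g'

/-- Hamming distance between two port assignments. -/
def hdist (k k' : Finset Node) : ℕ := (k ∆ k').card

/-- The Hamming diameter of `K` equals `n`. -/
def HamDiamEq (K : Set (Finset Node)) (n : ℕ) : Prop :=
  (∃ k ∈ K, ∃ k' ∈ K, hdist k k' = n) ∧ ∀ k ∈ K, ∀ k' ∈ K, hdist k k' ≤ n

/-- `G` is connected: nonempty, and any two distinct nodes are joined by a walk. -/
def Connected (G : Graph) : Prop :=
  G.Nonempty ∧ ∀ p ∈ nodes G, ∀ q ∈ nodes G, p ≠ q →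
    ∃ (n : ℕ) (f : ℕ → Node), f 0 = p ∧ f n = q ∧
      ∀ i < n, ({f i, f (i + 1)} : Finset Node) ∈ G

/-- `C` is a simple path between `p` and `q`. -/
def IsSimplePath (C : Graph) (p q : Node) : Prop :=
  Connected C ∧ ports C = {p, q} ∧
    ∀ v ∈ nodes C, v ≠ p → v ≠ q → deg C v = 2

/-- A cycle: a connected graph all of whose nodes lie in exactly two edges. -/
def IsCycle (C : Graph) : Prop :=
  Connected C ∧ ∀ v ∈ nodes C, deg C v = 2

/-- A semi-Kekulé state of `G`: every internal node of `G` lies in an odd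
number of edges of `W`. -/
def IsSemiKekule (G W : Graph) : Prop :=
  W ⊆ G ∧ ∀ v ∈ internal G, deg W v % 2 = 1

/-- The signature of `G`. -/
def sig (G : Graph) : ℕ := (internal G).card % 2

/-- `G` is omniconjugated. -/
def Omniconjugated (G : Graph) : Prop :=
  2 ≤ (ports G).card ∧ KP G = {g | g ⊆ ports G ∧ g.card % 2 = sig G}

instance : Std.Commutative (α := Finset Node) (· ∆ ·) := ⟨symmDiff_comm⟩
instance : Std.Associative (α := Finset Node) (· ∆ ·) := ⟨symmDiff_assoc⟩

/-- The `⊕`-sum of a finite family of port assignments. -/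
def xorSum (D : Finset (Finset Node)) : Finset Node := D.fold (· ∆ ·) ∅ id

/-!
The new node `w` is internal of degree two, so a Kekulé state of the subdivided graph contains
exactly one of `{p, w}`, `{w, v}`. Choosing `{w, v}` corresponds to a state of `G` containing
`{p, v}`, choosing `{p, w}` to one avoiding it; all other edges are kept. This is a bijection of
Kekulé states under which every port keeps its status except `p`, which is toggled. Toggling one
port flips the parity of a port assignment, and adding the internal node `w` flips the signature,
so the parity description of the Kekulé port assignments survives.
-/

open Finset

theorem mem_nodes_iff {G : Graph} {u : Node} : u ∈ nodes G ↔ ∃ e ∈ G, u ∈ e := by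
  simp [nodes]

theorem mem_nodes_iff_deg_pos {G : Graph} {u : Node} : u ∈ nodes G ↔ 0 < deg G u := by
  rw [mem_nodes_iff, deg, card_pos, filter_nonempty_iff]

theorem nodes_mono {W G : Graph} (h : W ⊆ G) : nodes W ⊆ nodes G :=
  biUnion_subset_biUnion_of_subset_left _ h

theorem deg_eq_zero_of_notMem_nodes {G : Graph} {u : Node} (h : u ∉ nodes G) : deg G u = 0 := by
  rwa [mem_nodes_iff_deg_pos, Nat.pos_iff_ne_zero, not_not] at h

theorem deg_insert {W : Graph} {x : Finset Node} (hx : x ∉ W) (u : Node) :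
    deg (insert x W) u = deg W u + if u ∈ x then 1 else 0 := by
  unfold deg
  rw [filter_insert]
  split_ifs
  · exact card_insert_of_notMem fun h => hx (mem_filter.1 h).1
  · rfl

theorem deg_erase_add {W : Graph} {x : Finset Node} (hx : x ∈ W) (u : Node) :
    deg (W.erase x) u + (if u ∈ x then 1 else 0) = deg W u := by
  rw [← deg_insert (notMem_erase x W), insert_erase hx]

theorem deg_of_mem_ports {G W : Graph} {p : Node} {e : Finset Node} (hp : p ∈ ports G)
    (he : e ∈ G) (hpe : p ∈ e) (hW : W ⊆ G) : deg W p = if e ∈ W then 1 else 0 := by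
  have hGp : G.filter (p ∈ ·) = {e} := by
    obtain ⟨f, hf⟩ := card_eq_one.1 (mem_filter.1 hp).2
    rw [hf, mem_singleton.1 (hf ▸ mem_filter.2 ⟨he, hpe⟩ : e ∈ ({f} : Finset _))]
  have hWp : W.filter (p ∈ ·) ⊆ {e} := hGp ▸ filter_subset_filter _ hW
  unfold deg
  split_ifs with heW
  · rw [eq_singleton_iff_unique_mem.2 ⟨mem_filter.2 ⟨heW, hpe⟩, fun f hf => mem_singleton.1 (hWp hf)⟩,
      card_singleton]
  · refine card_eq_zero.2 (eq_empty_of_forall_notMem fun f hf => heW ?_)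
    exact mem_singleton.1 (hWp hf) ▸ (mem_filter.1 hf).1

theorem card_symmDiff_singleton_mod_two (g : Finset Node) (p : Node) :
    (g ∆ {p}).card % 2 = (g.card + 1) % 2 := by
  by_cases hp : p ∈ g
  · have : g ∆ {p} = g.erase p := by
      ext; simp only [mem_symmDiff, mem_singleton, mem_erase]; grind
    rw [this, ← card_erase_add_one hp]
    omega
  · have : g ∆ {p} = insert p g := by
      ext; simp only [mem_symmDiff, mem_singleton, mem_insert]; grind
    rw [this, card_insert_of_notMem hp]

theorem Omniconjugated.of_KP_toggle {G G' : Graph} {p : Node} (hG : Omniconjugated G)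
    (hp : p ∈ ports G) (hports : ports G' = ports G) (hsig : sig G' = (sig G + 1) % 2)
    (hKP : ∀ g, g ∈ KP G' ↔ g ∆ {p} ∈ KP G) : Omniconjugated G' := by
  refine ⟨hports ▸ hG.1, Set.ext fun g => ?_⟩
  have hsub : g ∆ {p} ⊆ ports G ↔ g ⊆ ports G := by
    simp only [subset_iff, mem_symmDiff, mem_singleton]
    grind
  have hsig2 : sig G < 2 := Nat.mod_lt _ two_pos
  rw [hKP, hG.2, Set.mem_ofPred_eq, Set.mem_ofPred_eq, hsub, hports, hsig,
    card_symmDiff_singleton_mod_two]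
  exact and_congr_right fun _ => by omega

def subdivide (G : Graph) (p v w : Node) : Graph :=
  (G \ {({p, v} : Finset Node)}) ∪ {({p, w} : Finset Node), ({w, v} : Finset Node)}

/-- The image of a Kekulé state of `G` in `subdivide G p v w`. -/
def subdivideState (p v w : Node) (W : Graph) : Graph :=
  if ({p, v} : Finset Node) ∈ W then insert {w, v} (W.erase {p, v}) else insert {p, w} W

theorem subdivide_eq_insert (G : Graph) (p v w : Node) :
    subdivide G p v w = insert {p, w} (insert {w, v} (G.erase {p, v})) := by
  ext f
  simp only [subdivide, mem_union, mem_sdiff, mem_singleton, mem_insert, mem_erase]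
  tauto

theorem subdivideState_subset {G W : Graph} {p v w : Node} (hW : W ⊆ G) :
    subdivideState p v w W ⊆ subdivide G p v w := by
  intro f hf
  rw [subdivide_eq_insert, mem_insert, mem_insert, mem_erase]
  by_cases he : ({p, v} : Finset Node) ∈ W
  · rw [subdivideState, if_pos he, mem_insert, mem_erase] at hf
    grind
  · rw [subdivideState, if_neg he, mem_insert] at hf
    rcases hf with hf | hf
    · exact Or.inl hf
    · exact Or.inr (Or.inr ⟨fun hfe => he (hfe ▸ hf), hW hf⟩)

structure PortEdgeSubdivision (G : Graph) (p v w : Node) : Prop where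
  port : p ∈ ports G
  edge : ({p, v} : Finset Node) ∈ G
  ne : p ≠ v
  fresh : w ∉ nodes G

namespace PortEdgeSubdivision

variable {G W : Graph} {p v w : Node}

theorem w_ne_p (h : PortEdgeSubdivision G p v w) : w ≠ p :=
  fun hwp => h.fresh (mem_nodes_iff.2 ⟨_, h.edge, by simp [hwp]⟩)

theorem w_ne_v (h : PortEdgeSubdivision G p v w) : w ≠ v :=
  fun hwv => h.fresh (mem_nodes_iff.2 ⟨_, h.edge, by simp [hwv]⟩)

theorem pw_ne_wv (h : PortEdgeSubdivision G p v w) : ({p, w} : Finset Node) ≠ {w, v} := by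
  intro hab
  have : p ∈ ({w, v} : Finset Node) := hab ▸ mem_insert_self p {w}
  simp [h.w_ne_p.symm, h.ne] at this

theorem deg_fresh (h : PortEdgeSubdivision G p v w) (hW : W ⊆ G) : deg W w = 0 :=
  deg_eq_zero_of_notMem_nodes fun hw => h.fresh (nodes_mono hW hw)

theorem notMem_of_fresh_mem (h : PortEdgeSubdivision G p v w) (hW : W ⊆ G) {x : Finset Node}
    (hx : w ∈ x) : x ∉ W :=
  fun hxW => h.fresh (mem_nodes_iff.2 ⟨x, hW hxW, hx⟩)

theorem deg_subdivide (h : PortEdgeSubdivision G p v w) (u : Node) :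
    deg (subdivide G p v w) u = if u = w then 2 else deg G u := by
  have hb : {w, v} ∉ G.erase {p, v} := h.notMem_of_fresh_mem (erase_subset _ _) (by simp)
  have ha : {p, w} ∉ insert {w, v} (G.erase {p, v}) := by
    rw [mem_insert, not_or]
    exact ⟨h.pw_ne_wv, h.notMem_of_fresh_mem (erase_subset _ _) (by simp)⟩
  rw [subdivide_eq_insert, deg_insert ha, deg_insert hb, ← deg_erase_add h.edge u]
  by_cases huw : u = w
  · subst huw
    simp [h.deg_fresh (erase_subset _ _), h.w_ne_p, h.w_ne_v]
  · simp only [mem_insert, mem_singleton, huw]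
    grind [h.w_ne_p, h.w_ne_v, h.ne]

theorem nodes_subdivide (h : PortEdgeSubdivision G p v w) :
    nodes (subdivide G p v w) = insert w (nodes G) := by
  ext u
  rw [mem_insert, mem_nodes_iff_deg_pos, mem_nodes_iff_deg_pos, h.deg_subdivide]
  split_ifs with huw <;> simp [huw]

theorem ports_subdivide (h : PortEdgeSubdivision G p v w) : ports (subdivide G p v w) = ports G := by
  ext u
  simp only [ports, mem_filter, h.nodes_subdivide, mem_insert, h.deg_subdivide]
  split_ifs with huw
  · simp [huw, h.fresh]
  · simp [huw]

theorem internal_subdivide (h : PortEdgeSubdivision G p v w) :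
    internal (subdivide G p v w) = insert w (internal G) := by
  ext u
  simp only [internal, mem_filter, h.nodes_subdivide, mem_insert, h.deg_subdivide]
  split_ifs with huw <;> simp [huw]

theorem sig_subdivide (h : PortEdgeSubdivision G p v w) :
    sig (subdivide G p v w) = (sig G + 1) % 2 := by
  have hw : w ∉ internal G := fun hw => h.fresh (mem_filter.1 hw).1
  rw [sig, sig, h.internal_subdivide, card_insert_of_notMem hw, Nat.mod_add_mod]

theorem deg_subdivideState_of_ne (h : PortEdgeSubdivision G p v w) (hW : W ⊆ G) {u : Node}
    (hu : u ≠ p) : deg (subdivideState p v w W) u = deg W u + if u = w then 1 else 0 := by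
  by_cases he : ({p, v} : Finset Node) ∈ W
  · rw [subdivideState, if_pos he,
      deg_insert (h.notMem_of_fresh_mem ((erase_subset _ _).trans hW) (by simp)),
      ← deg_erase_add he u]
    simp only [mem_insert, mem_singleton]
    grind [h.w_ne_p, h.w_ne_v]
  · rw [subdivideState, if_neg he, deg_insert (h.notMem_of_fresh_mem hW (by simp))]
    simp only [mem_insert, mem_singleton]
    grind [h.w_ne_p]

theorem deg_subdivideState_port (h : PortEdgeSubdivision G p v w) (hW : W ⊆ G) :
    deg (subdivideState p v w W) p + deg W p = 1 := by
  have hdeg {W' : Graph} (hW' : W' ⊆ G) := deg_of_mem_ports h.port h.edge (by simp) hW'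
  by_cases he : ({p, v} : Finset Node) ∈ W
  · rw [subdivideState, if_pos he,
      deg_insert (h.notMem_of_fresh_mem ((erase_subset _ _).trans hW) (by simp)),
      hdeg ((erase_subset _ _).trans hW), hdeg hW]
    simp [he, h.w_ne_p.symm, h.ne]
  · rw [subdivideState, if_neg he, deg_insert (h.notMem_of_fresh_mem hW (by simp)), hdeg hW]
    simp [he]

theorem rest_subdivideState (h : PortEdgeSubdivision G p v w) (hW : W ⊆ G) :
    rest (subdivideState p v w W) (ports G) = rest W (ports G) ∆ {p} := by
  ext q
  simp only [rest, mem_inter, mem_symmDiff, mem_singleton, mem_nodes_iff_deg_pos]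
  by_cases hqp : q = p
  · subst hqp
    have := h.deg_subdivideState_port hW
    simp only [h.port, true_and, not_true_eq_false, and_false, false_or]
    omega
  · have hqw : q ∈ ports G → q ≠ w := fun hq hqw => h.fresh (hqw ▸ mem_filter.1 hq).1
    rw [h.deg_subdivideState_of_ne hW hqp]
    grind

theorem isKekule_subdivideState_iff (h : PortEdgeSubdivision G p v w) (hW : W ⊆ G) :
    IsKekule (subdivide G p v w) (subdivideState p v w W) ↔ IsKekule G W := by
  have hne {u : Node} (hu : u ∈ internal G) : u ≠ p ∧ u ≠ w :=
    ⟨fun hup => (mem_filter.1 hu).2 (hup ▸ (mem_filter.1 h.port).2),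
      fun huw => h.fresh (huw ▸ (mem_filter.1 hu).1)⟩
  rw [IsKekule, IsKekule, h.internal_subdivide, forall_mem_insert,
    h.deg_subdivideState_of_ne hW h.w_ne_p, h.deg_fresh hW, if_pos rfl]
  simp only [subdivideState_subset hW, hW, true_and]
  refine forall₂_congr fun u hu => ?_
  rw [h.deg_subdivideState_of_ne hW (hne hu).1, if_neg (hne hu).2, add_zero]

theorem exists_subdivideState_eq (h : PortEdgeSubdivision G p v w) {W' : Graph}
    (hW' : IsKekule (subdivide G p v w) W') : ∃ W ⊆ G, subdivideState p v w W = W' := by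
  have hcases (f : Finset Node) (hf : f ∈ W') : f = {p, w} ∨ f = {w, v} ∨ f ∈ G.erase {p, v} := by
    simpa only [subdivide_eq_insert, mem_insert] using hW'.1 hf
  have hpv_notMem : ({p, v} : Finset Node) ∉ W' := fun he => by
    rcases hcases _ he with hea | heb | he
    · exact h.fresh (mem_nodes_iff.2 ⟨_, h.edge, hea ▸ by simp⟩)
    · exact h.fresh (mem_nodes_iff.2 ⟨_, h.edge, heb ▸ by simp⟩)
    · exact notMem_erase _ _ he
  -- the new node `w` is internal, so exactly one of its two edges lies in `W'`
  obtain ⟨x, hx⟩ := card_eq_one.1 (hW'.2 w (h.internal_subdivide ▸ mem_insert_self w _))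
  have hxW' : x ∈ W' ∧ w ∈ x := mem_filter.1 (hx ▸ mem_singleton_self x)
  have honly (f : Finset Node) (hf : f ∈ W') (hwf : w ∈ f) : f = x :=
    mem_singleton.1 (hx ▸ mem_filter.2 ⟨hf, hwf⟩)
  rcases hcases x hxW'.1 with rfl | rfl | hxG
  · refine ⟨W'.erase {p, w}, fun f hf => ?_, ?_⟩
    · obtain ⟨hfa, hf⟩ := mem_erase.1 hf
      rcases hcases f hf with rfl | rfl | hfG
      · exact absurd rfl hfa
      · exact absurd (honly _ hf (by simp)) h.pw_ne_wv.symm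
      · exact mem_of_mem_erase hfG
    · rw [subdivideState, if_neg fun he => hpv_notMem (mem_of_mem_erase he), insert_erase hxW'.1]
  · refine ⟨insert {p, v} (W'.erase {w, v}), insert_subset h.edge fun f hf => ?_, ?_⟩
    · obtain ⟨hfb, hf⟩ := mem_erase.1 hf
      rcases hcases f hf with rfl | rfl | hfG
      · exact absurd (honly _ hf (by simp)) h.pw_ne_wv
      · exact absurd rfl hfb
      · exact mem_of_mem_erase hfG
    · rw [subdivideState, if_pos (mem_insert_self _ _),
        erase_insert fun he => hpv_notMem (mem_of_mem_erase he), insert_erase hxW'.1]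
  · exact absurd (mem_nodes_iff.2 ⟨x, mem_of_mem_erase hxG, hxW'.2⟩) h.fresh

theorem mem_KP_subdivide_iff (h : PortEdgeSubdivision G p v w) (g : Finset Node) :
    g ∈ KP (subdivide G p v w) ↔ g ∆ {p} ∈ KP G := by
  constructor
  · rintro ⟨W', hW', rfl⟩
    obtain ⟨W, hW, rfl⟩ := h.exists_subdivideState_eq hW'
    refine ⟨W, (h.isKekule_subdivideState_iff hW).1 hW', ?_⟩
    rw [h.ports_subdivide, h.rest_subdivideState hW, symmDiff_symmDiff_cancel_right]
  · rintro ⟨W, hW, hg⟩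
    refine ⟨_, (h.isKekule_subdivideState_iff hW.1).2 hW, ?_⟩
    rw [h.ports_subdivide, h.rest_subdivideState hW.1, hg, symmDiff_symmDiff_cancel_right]

end PortEdgeSubdivision

/-- Replacing the edge at a port by two edges through a new
node of degree 2 preserves omniconjugation. -/
theorem statement18 (G : Graph) (hG : IsGraph G) (homni : Omniconjugated G)
    (p v w : Node) (hp : p ∈ ports G) (hpv : ({p, v} : Finset Node) ∈ G)
    (hw : w ∉ nodes G) :
    Omniconjugated ((G \ {({p, v} : Finset Node)}) ∪
      {({p, w} : Finset Node), ({w, v} : Finset Node)}) := by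
  have h : PortEdgeSubdivision G p v w := ⟨hp, hpv, card_pair_eq_two_iff.1 (hG _ hpv), hw⟩
  exact homni.of_KP_toggle hp h.ports_subdivide h.sig_subdivide h.mem_KP_subdivide_iff

end Kekule
end

section
/- Let G' and G'' be graphs on disjoint node sets, each having at least two ports. Let p' be a port of G' with unique incident edge {p', v'}, and let p'' be a port of G'' with unique incident edge {p'', v''}. Let G = (G' \ {{p', v'}}) ∪ (G'' \ {{p'', v''}}) ∪ { {v', v''} }, the graph obtained by removing the two ports p' and p'' and identifying their incident edges into the single edge {v', v''}. Then G is omniconjugated if and only if both G' and G'' are omniconjugated. -/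
open scoped symmDiff

namespace Kekule

/-!
Kekulé states of the glued graph correspond exactly to pairs of Kekulé states of the two
constituents that agree on the removed port edges: the new edge `{v', v''}` is used iff both
`{p', v'}` and `{p'', v''}` are. Hence the Kekulé cell of the glued graph is obtained from the two
cells by matching the ports `p'`, `p''` and forgetting them, while ports and internal nodes are
just the disjoint unions (minus `p'`, `p''`), so signatures add. It remains to see that this
gluing of cells yields a full parity cell iff both cells are full: the parity of a port
assignment on one side can be corrected by toggling the matched port, and since the other side
has a second port, every value of the matched port can be forced.
-/

open Finset

section Degree

variable {A B H W : Graph} {v : Node}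

lemma mem_nodes : v ∈ nodes H ↔ ∃ e ∈ H, v ∈ e := by
  simp [nodes]

lemma edge_subset_nodes {e : Finset Node} (he : e ∈ H) : e ⊆ nodes H :=
  fun _ hv => mem_nodes.2 ⟨e, he, hv⟩

lemma nodes_mono_s19 (h : A ⊆ B) : nodes A ⊆ nodes B :=
  biUnion_subset_biUnion_of_subset_left _ h

lemma deg_ne_zero_iff : deg H v ≠ 0 ↔ v ∈ nodes H := by
  rw [deg, Ne, card_eq_zero, filter_eq_empty_iff, mem_nodes]
  push Not
  rfl

lemma deg_eq_zero_of_notMem (h : v ∉ nodes H) : deg H v = 0 := by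
  by_contra h'
  exact h (deg_ne_zero_iff.1 h')

lemma deg_mono (h : A ⊆ B) (v : Node) : deg A v ≤ deg B v :=
  card_le_card (filter_subset_filter _ h)

lemma mem_ports_iff : v ∈ ports H ↔ deg H v = 1 := by
  rw [ports, mem_filter, ← deg_ne_zero_iff]
  omega

lemma mem_internal_iff : v ∈ internal H ↔ deg H v ≠ 0 ∧ deg H v ≠ 1 := by
  rw [internal, mem_filter, ← deg_ne_zero_iff]

lemma ports_subset_nodes : ports H ⊆ nodes H := filter_subset _ _

lemma internal_subset_nodes : internal H ⊆ nodes H := filter_subset _ _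

lemma deg_union (h : Disjoint (nodes A) (nodes B)) (v : Node) :
    deg (A ∪ B) v = deg A v + deg B v := by
  rw [deg, filter_union, card_union_of_disjoint]
  · rfl
  refine disjoint_left.2 fun e heA heB => ?_
  rw [mem_filter] at heA heB
  exact disjoint_left.1 h (edge_subset_nodes heA.1 heA.2) (edge_subset_nodes heB.1 heB.2)

lemma deg_union_singleton {e : Finset Node} (he : e ∉ H) (v : Node) :
    deg (H ∪ {e}) v = deg H v + if v ∈ e then 1 else 0 := by
  rw [deg, filter_union, card_union_of_disjoint
    (disjoint_filter_filter (disjoint_singleton_right.2 he)), filter_singleton]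
  split_ifs <;> rfl

lemma deg_sdiff_singleton_add {e : Finset Node} (he : e ∈ H) (v : Node) :
    deg (H \ {e}) v + (if v ∈ e then 1 else 0) = deg H v := by
  rw [← deg_union_singleton (notMem_sdiff_of_mem_right (mem_singleton_self e)),
    sdiff_union_of_subset (singleton_subset_iff.2 he)]

lemma eq_of_mem_ports {p : Node} {e e' : Finset Node} (hp : p ∈ ports H)
    (he : e ∈ H) (hpe : p ∈ e) (he' : e' ∈ H) (hpe' : p ∈ e') : e = e' :=
  card_le_one.1 (mem_ports_iff.1 hp).le e (mem_filter.2 ⟨he, hpe⟩) e' (mem_filter.2 ⟨he', hpe'⟩)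

lemma sum_deg_eq_two_mul_card (hH : IsGraph H) (hW : W ⊆ H) :
    ∑ v ∈ nodes H, deg W v = 2 * #W :=
  calc ∑ v ∈ nodes H, deg W v = ∑ e ∈ W, #(nodes H ∩ e) := by
        simp_rw [deg, ← filter_mem_eq_inter, card_eq_sum_ones, sum_filter]
        exact sum_comm
    _ = ∑ _e ∈ W, 2 := sum_congr rfl fun e he => by
        rw [inter_eq_right.2 (edge_subset_nodes (hW he)), hH e (hW he)]
    _ = 2 * #W := by rw [sum_const, smul_eq_mul, mul_comm]

end Degree

def parityCell (P : Finset Node) (s : ℕ) : Set (Finset Node) :=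
  {g | g ⊆ P ∧ #g % 2 = s}

lemma card_rest_mod_two {H W : Graph} (hH : IsGraph H) (hW : IsKekule H W) :
    #(rest W (ports H)) % 2 = sig H := by
  have hnodes : nodes H = internal H ∪ ports H := by
    ext v
    simp only [internal, ports, mem_union, mem_filter]
    tauto
  have hdisj : Disjoint (internal H) (ports H) :=
    disjoint_filter.2 fun _ _ h h' => h h'
  have hint : ∑ v ∈ internal H, deg W v = #(internal H) := by
    rw [sum_congr rfl hW.2, sum_const, smul_eq_mul, mul_one]
  have hports : ∑ v ∈ ports H, deg W v = #(rest W (ports H)) := by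
    rw [rest, ← filter_mem_eq_inter, card_eq_sum_ones, sum_filter]
    refine sum_congr rfl fun v hv => ?_
    have := (deg_mono hW.1 v).trans (mem_ports_iff.1 hv).le
    split_ifs with h
    · have := deg_ne_zero_iff.2 h
      omega
    · exact deg_eq_zero_of_notMem h
  have := sum_deg_eq_two_mul_card hH hW.1
  rw [hnodes, sum_union hdisj, hint, hports] at this
  rw [sig]
  omega

lemma KP_subset_parityCell {H : Graph} (hH : IsGraph H) :
    KP H ⊆ parityCell (ports H) (sig H) := by
  rintro _ ⟨W, hW, rfl⟩
  exact ⟨inter_subset_left, card_rest_mod_two hH hW⟩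

lemma omniconjugated_iff {H : Graph} (hH : IsGraph H) :
    Omniconjugated H ↔ 2 ≤ #(ports H) ∧ parityCell (ports H) (sig H) ⊆ KP H :=
  and_congr_right fun _ =>
    ⟨fun h => h.ge, fun h => (KP_subset_parityCell hH).antisymm h⟩

section Cells

variable {P₁ P₂ : Finset Node} {p₁ p₂ : Node} {s₁ s₂ : ℕ} {K₁ K₂ : Set (Finset Node)}

def glueCells (p₁ p₂ : Node) (K₁ K₂ : Set (Finset Node)) : Set (Finset Node) :=
  {g | ∃ g₁ ∈ K₁, ∃ g₂ ∈ K₂, (p₁ ∈ g₁ ↔ p₂ ∈ g₂) ∧ g = g₁.erase p₁ ∪ g₂.erase p₂}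

lemma glueCells_comm : glueCells p₁ p₂ K₁ K₂ = glueCells p₂ p₁ K₂ K₁ := by
  ext g
  simp only [glueCells, Set.mem_ofPred_eq]
  constructor <;>
  · rintro ⟨g₁, hg₁, g₂, hg₂, hm, rfl⟩
    exact ⟨g₂, hg₂, g₁, hg₁, hm.symm, union_comm _ _⟩

lemma eq_of_erase_eq {s t : Finset Node} {a : Node} (h : s.erase a = t.erase a)
    (ha : a ∈ s ↔ a ∈ t) : s = t := by
  by_cases has : a ∈ s
  · rw [← insert_erase has, h, insert_erase (ha.1 has)]
  · rw [← erase_eq_of_notMem has, h, erase_eq_of_notMem (mt ha.2 has)]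

lemma union_inter_eq_left {A B X : Finset Node} (hA : A ⊆ X) (hB : Disjoint B X) :
    (A ∪ B) ∩ X = A := by
  rw [union_inter_distrib_right, inter_eq_left.2 hA, disjoint_iff_inter_eq_empty.1 hB,
    union_empty]

lemma parityCell_subset_glueCells (hp₁ : p₁ ∈ P₁) (hp₂ : p₂ ∈ P₂) (hs₁ : s₁ < 2) (hs₂ : s₂ < 2)
    (h₁ : parityCell P₁ s₁ ⊆ K₁) (h₂ : parityCell P₂ s₂ ⊆ K₂) :
    parityCell (P₁.erase p₁ ∪ P₂.erase p₂) ((s₁ + s₂) % 2) ⊆ glueCells p₁ p₂ K₁ K₂ := by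
  rintro g ⟨hgP, hgs⟩
  set a₁ := g ∩ P₁.erase p₁
  set a₂ := g \ P₁.erase p₁
  have ha₂ : a₂ ⊆ P₂.erase p₂ := fun x hx =>
    (mem_union.1 (hgP (mem_sdiff.1 hx).1)).resolve_left (mem_sdiff.1 hx).2
  have hp₁a : p₁ ∉ a₁ := by simp [a₁]
  have hp₂a : p₂ ∉ a₂ := fun h => by simpa using ha₂ h
  have hcard : #a₁ + #a₂ = #g := card_inter_add_card_sdiff g _
  have hg : g = a₁.erase p₁ ∪ a₂.erase p₂ := by
    rw [erase_eq_of_notMem hp₁a, erase_eq_of_notMem hp₂a, union_comm, sdiff_union_inter]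
  have ha₁P : a₁ ⊆ P₁ := inter_subset_right.trans (erase_subset _ _)
  have ha₂P : a₂ ⊆ P₂ := ha₂.trans (erase_subset _ _)
  by_cases hpar : #a₁ % 2 = s₁
  · exact ⟨a₁, h₁ ⟨ha₁P, hpar⟩, a₂, h₂ ⟨ha₂P, by omega⟩, iff_of_false hp₁a hp₂a, hg⟩
  · refine ⟨insert p₁ a₁, h₁ ⟨insert_subset hp₁ ha₁P, ?_⟩, insert p₂ a₂,
      h₂ ⟨insert_subset hp₂ ha₂P, ?_⟩, iff_of_true (mem_insert_self _ _) (mem_insert_self _ _), ?_⟩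
    · rw [card_insert_of_notMem hp₁a]
      omega
    · rw [card_insert_of_notMem hp₂a]
      omega
    · rwa [erase_insert hp₁a, erase_insert hp₂a, ← erase_eq_of_notMem hp₁a,
        ← erase_eq_of_notMem hp₂a]

/-- The second side has a port besides `p₂`, so a port assignment `k` of either parity is
available there; gluing it to a given `g` forces the matched port `p₁` to take the value it
has in `g`. -/
lemma parityCell_subset_of_subset_glueCells (hP : Disjoint P₁ P₂) (hp₂ : p₂ ∈ P₂)
    (hP₂ : 2 ≤ #P₂) (hK₁ : ∀ g ∈ K₁, g ⊆ P₁) (hK₂ : K₂ ⊆ parityCell P₂ s₂)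
    (h : parityCell (P₁.erase p₁ ∪ P₂.erase p₂) ((s₁ + s₂) % 2) ⊆ glueCells p₁ p₂ K₁ K₂) :
    parityCell P₁ s₁ ⊆ K₁ := by
  rintro g ⟨hgP, hgs⟩
  have hP₂' : 1 ≤ #(P₂.erase p₂) := by rw [card_erase_of_mem hp₂]; omega
  have hn : (s₂ + if p₁ ∈ g then 1 else 0) % 2 ≤ #(P₂.erase p₂) :=
    (Nat.le_of_lt_succ (Nat.mod_lt _ two_pos)).trans hP₂'
  obtain ⟨k, hkP, hk⟩ := exists_subset_card_eq hn
  have hkP₂ : k ⊆ P₂ := hkP.trans (erase_subset _ _)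
  have hgP₁ : g.erase p₁ ⊆ P₁ := (erase_subset _ _).trans hgP
  have hgk : #(g.erase p₁ ∪ k) % 2 = (s₁ + s₂) % 2 := by
    rw [card_union_of_disjoint (hP.mono hgP₁ hkP₂), hk, card_erase_eq_ite]
    have := card_pos (s := g)
    split_ifs <;> grind
  obtain ⟨g₁, hg₁, g₂, hg₂, hm, heq⟩ := h ⟨union_subset_union (erase_subset_erase _ hgP) hkP, hgk⟩
  have hg₁P : g₁.erase p₁ ⊆ P₁ := (erase_subset _ _).trans (hK₁ g₁ hg₁)
  have hg₂P : g₂.erase p₂ ⊆ P₂ := (erase_subset _ _).trans (hK₂ hg₂).1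
  have hgg₁ : g.erase p₁ = g₁.erase p₁ := by
    rw [← union_inter_eq_left hgP₁ (hP.symm.mono_left hkP₂), heq,
      union_inter_eq_left hg₁P (hP.symm.mono_left hg₂P)]
  have hkg₂ : k = g₂.erase p₂ := by
    rw [← union_inter_eq_left hkP₂ (hP.mono_left hgP₁), union_comm, heq, union_comm,
      union_inter_eq_left hg₂P (hP.mono_left hg₁P)]
  have hp : p₁ ∈ g ↔ p₂ ∈ g₂ := by
    have hpar := (hK₂ hg₂).2
    rw [hkg₂, card_erase_eq_ite] at hk
    have := card_pos (s := g₂)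
    split_ifs at hk <;> grind
  rwa [eq_of_erase_eq hgg₁ (hp.trans hm.symm)]

end Cells

def glue (H₁ H₂ : Graph) (p₁ v₁ p₂ v₂ : Node) : Graph :=
  ((H₁ \ {({p₁, v₁} : Finset Node)}) ∪ (H₂ \ {({p₂, v₂} : Finset Node)})) ∪
    {({v₁, v₂} : Finset Node)}

def splice (W₁ W₂ : Graph) (p₁ v₁ p₂ v₂ : Node) : Graph :=
  if {p₁, v₁} ∈ W₁ then glue W₁ W₂ p₁ v₁ p₂ v₂ else W₁ ∪ W₂

lemma glue_comm (H₁ H₂ : Graph) (p₁ v₁ p₂ v₂ : Node) :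
    glue H₁ H₂ p₁ v₁ p₂ v₂ = glue H₂ H₁ p₂ v₂ p₁ v₁ := by
  rw [glue, glue, union_comm (H₁ \ _), pair_comm v₁ v₂]

lemma splice_comm {W₁ W₂ : Graph} {p₁ v₁ p₂ v₂ : Node}
    (hm : {p₁, v₁} ∈ W₁ ↔ {p₂, v₂} ∈ W₂) :
    splice W₁ W₂ p₁ v₁ p₂ v₂ = splice W₂ W₁ p₂ v₂ p₁ v₁ := by
  unfold splice
  split_ifs <;> simp_all [glue_comm, union_comm]

lemma splice_subset {G₁ G₂ W₁ W₂ : Graph} {p₁ v₁ p₂ v₂ : Node} (hW₁ : W₁ ⊆ G₁) (hW₂ : W₂ ⊆ G₂)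
    (hm : {p₁, v₁} ∈ W₁ ↔ {p₂, v₂} ∈ W₂) :
    splice W₁ W₂ p₁ v₁ p₂ v₂ ⊆ glue G₁ G₂ p₁ v₁ p₂ v₂ := by
  unfold splice glue
  split_ifs with he₁
  · gcongr
  · exact subset_union_left.trans' <| union_subset_union
      (subset_sdiff.2 ⟨hW₁, disjoint_singleton_right.2 he₁⟩)
      (subset_sdiff.2 ⟨hW₂, disjoint_singleton_right.2 (mt hm.2 he₁)⟩)

lemma ite_mem_pair {a b : Node} (hab : a ≠ b) (v : Node) :
    (if v ∈ ({a, b} : Finset Node) then 1 else 0) =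
      (if v = a then 1 else 0) + (if v = b then 1 else 0) := by
  by_cases ha : v = a <;> by_cases hb : v = b <;> simp_all

lemma deg_glue {H₁ H₂ : Graph} {p₁ v₁ p₂ v₂ : Node} (hd : Disjoint (nodes H₁) (nodes H₂))
    (h₁ : {p₁, v₁} ∈ H₁) (h₂ : {p₂, v₂} ∈ H₂) (hpv₁ : p₁ ≠ v₁) (hpv₂ : p₂ ≠ v₂) (v : Node) :
    deg (glue H₁ H₂ p₁ v₁ p₂ v₂) v + (if v = p₁ then 1 else 0) + (if v = p₂ then 1 else 0) =
      deg H₁ v + deg H₂ v := by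
  have hv₁ : v₁ ∈ nodes H₁ := edge_subset_nodes h₁ (by simp)
  have hv₂ : v₂ ∈ nodes H₂ := edge_subset_nodes h₂ (by simp)
  have hvv : v₁ ≠ v₂ := fun h => disjoint_left.1 hd hv₁ (h ▸ hv₂)
  have hb : {v₁, v₂} ∉ (H₁ \ {{p₁, v₁}}) ∪ (H₂ \ {{p₂, v₂}}) := by
    rintro hb
    rcases mem_union.1 hb with hb | hb
    · exact disjoint_left.1 hd (edge_subset_nodes (mem_sdiff.1 hb).1 (by simp)) hv₂
    · exact disjoint_left.1 hd hv₁ (edge_subset_nodes (mem_sdiff.1 hb).1 (by simp))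
  have hd' : Disjoint (nodes (H₁ \ {{p₁, v₁}})) (nodes (H₂ \ {{p₂, v₂}})) :=
    hd.mono (nodes_mono_s19 sdiff_subset) (nodes_mono_s19 sdiff_subset)
  rw [glue, deg_union_singleton hb, deg_union hd', ← deg_sdiff_singleton_add h₁,
    ← deg_sdiff_singleton_add h₂, ite_mem_pair hpv₁, ite_mem_pair hpv₂, ite_mem_pair hvv]
  omega

structure Gluable (G₁ G₂ : Graph) (p₁ v₁ p₂ v₂ : Node) : Prop where
  isGraph₁ : IsGraph G₁
  isGraph₂ : IsGraph G₂
  disjoint : Disjoint (nodes G₁) (nodes G₂)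
  port₁ : p₁ ∈ ports G₁
  edge₁ : ({p₁, v₁} : Finset Node) ∈ G₁
  port₂ : p₂ ∈ ports G₂
  edge₂ : ({p₂, v₂} : Finset Node) ∈ G₂

namespace Gluable

variable {G₁ G₂ W₁ W₂ : Graph} {p₁ v₁ p₂ v₂ v : Node} (h : Gluable G₁ G₂ p₁ v₁ p₂ v₂)
include h

lemma symm : Gluable G₂ G₁ p₂ v₂ p₁ v₁ :=
  ⟨h.isGraph₂, h.isGraph₁, h.disjoint.symm, h.port₂, h.edge₂, h.port₁, h.edge₁⟩

lemma port_ne : p₁ ≠ v₁ := by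
  intro hpv
  have := h.isGraph₁ _ h.edge₁
  simp [hpv] at this

lemma port_mem_nodes : p₁ ∈ nodes G₁ := edge_subset_nodes h.edge₁ (by simp)

lemma end_mem_nodes : v₁ ∈ nodes G₁ := edge_subset_nodes h.edge₁ (by simp)

lemma notMem_nodes_right (hv : v ∈ nodes G₁) : v ∉ nodes G₂ := disjoint_left.1 h.disjoint hv

lemma deg_glue_add (v : Node) :
    deg (glue G₁ G₂ p₁ v₁ p₂ v₂) v + (if v = p₁ then 1 else 0) + (if v = p₂ then 1 else 0) =
      deg G₁ v + deg G₂ v :=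
  deg_glue h.disjoint h.edge₁ h.edge₂ h.port_ne h.symm.port_ne v

lemma deg_eq_zero_or (v : Node) : deg G₁ v = 0 ∨ deg G₂ v = 0 := by
  by_cases hv : v ∈ nodes G₁
  · exact Or.inr (deg_eq_zero_of_notMem (h.notMem_nodes_right hv))
  · exact Or.inl (deg_eq_zero_of_notMem hv)

lemma deg_port : deg G₁ p₁ = 1 := mem_ports_iff.1 h.port₁

lemma deg_port_right : deg G₂ p₁ = 0 :=
  deg_eq_zero_of_notMem (h.notMem_nodes_right h.port_mem_nodes)

lemma ports_glue :
    ports (glue G₁ G₂ p₁ v₁ p₂ v₂) = (ports G₁).erase p₁ ∪ (ports G₂).erase p₂ := by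
  ext v
  have := h.deg_glue_add v
  have := h.deg_eq_zero_or v
  have := h.deg_port
  have := h.symm.deg_port
  have := h.deg_port_right
  have := h.symm.deg_port_right
  simp only [mem_union, mem_erase, mem_ports_iff]
  grind

lemma internal_glue :
    internal (glue G₁ G₂ p₁ v₁ p₂ v₂) = internal G₁ ∪ internal G₂ := by
  ext v
  have := h.deg_glue_add v
  have := h.deg_eq_zero_or v
  have := h.deg_port
  have := h.symm.deg_port
  have := h.deg_port_right
  have := h.symm.deg_port_right
  simp only [mem_union, mem_internal_iff]
  grind

lemma sig_glue : sig (glue G₁ G₂ p₁ v₁ p₂ v₂) = (sig G₁ + sig G₂) % 2 := by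
  rw [sig, sig, sig, h.internal_glue, card_union_of_disjoint
    (h.disjoint.mono internal_subset_nodes internal_subset_nodes), Nat.add_mod]

lemma isGraph_glue : IsGraph (glue G₁ G₂ p₁ v₁ p₂ v₂) := by
  intro e he
  simp only [glue, mem_union, mem_sdiff, mem_singleton] at he
  rcases he with (⟨he, -⟩ | ⟨he, -⟩) | rfl
  · exact h.isGraph₁ e he
  · exact h.isGraph₂ e he
  · exact card_pair fun hv => h.notMem_nodes_right h.end_mem_nodes (hv ▸ h.symm.end_mem_nodes)

lemma deg_splice (hW₁ : W₁ ⊆ G₁) (hW₂ : W₂ ⊆ G₂) (hm : {p₁, v₁} ∈ W₁ ↔ {p₂, v₂} ∈ W₂)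
    (hv : v ∈ nodes G₁) (hvp : v ≠ p₁) : deg (splice W₁ W₂ p₁ v₁ p₂ v₂) v = deg W₁ v := by
  have hd : Disjoint (nodes W₁) (nodes W₂) := h.disjoint.mono (nodes_mono_s19 hW₁) (nodes_mono_s19 hW₂)
  have hv₂ : deg W₂ v = 0 :=
    deg_eq_zero_of_notMem fun hv' => h.notMem_nodes_right hv (nodes_mono_s19 hW₂ hv')
  have hvp₂ : v ≠ p₂ := fun hvp₂ => h.notMem_nodes_right hv (hvp₂ ▸ h.symm.port_mem_nodes)
  unfold splice
  split_ifs with he₁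
  · have := deg_glue hd he₁ (hm.1 he₁) h.port_ne h.symm.port_ne v
    simp only [hvp, hvp₂, if_false, hv₂] at this
    omega
  · rw [deg_union hd, hv₂, add_zero]

lemma ne_port_of_mem_internal (hv : v ∈ internal G₁) : v ≠ p₁ := by
  rintro rfl
  exact (mem_internal_iff.1 hv).2 h.deg_port

lemma isKekule_splice_iff (hW₁ : W₁ ⊆ G₁) (hW₂ : W₂ ⊆ G₂)
    (hm : {p₁, v₁} ∈ W₁ ↔ {p₂, v₂} ∈ W₂) :
    IsKekule (glue G₁ G₂ p₁ v₁ p₂ v₂) (splice W₁ W₂ p₁ v₁ p₂ v₂) ↔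
      IsKekule G₁ W₁ ∧ IsKekule G₂ W₂ := by
  simp only [IsKekule, h.internal_glue, mem_union, or_imp, forall_and,
    splice_subset hW₁ hW₂ hm, hW₁, hW₂, true_and]
  refine and_congr (forall₂_congr fun v hv => ?_) (forall₂_congr fun v hv => ?_)
  · rw [h.deg_splice hW₁ hW₂ hm (internal_subset_nodes hv) (h.ne_port_of_mem_internal hv)]
  · rw [splice_comm hm, h.symm.deg_splice hW₂ hW₁ hm.symm (internal_subset_nodes hv)
      (h.symm.ne_port_of_mem_internal hv)]

lemma erase_rest_splice (hW₁ : W₁ ⊆ G₁) (hW₂ : W₂ ⊆ G₂) (hm : {p₁, v₁} ∈ W₁ ↔ {p₂, v₂} ∈ W₂) :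
    (rest (splice W₁ W₂ p₁ v₁ p₂ v₂) (ports G₁)).erase p₁ = (rest W₁ (ports G₁)).erase p₁ := by
  ext v
  simp only [rest, mem_erase, mem_inter, ← deg_ne_zero_iff]
  refine and_congr_right fun hvp => and_congr_right fun hv => ?_
  rw [h.deg_splice hW₁ hW₂ hm (ports_subset_nodes hv) hvp]

lemma rest_splice (hW₁ : W₁ ⊆ G₁) (hW₂ : W₂ ⊆ G₂) (hm : {p₁, v₁} ∈ W₁ ↔ {p₂, v₂} ∈ W₂) :
    rest (splice W₁ W₂ p₁ v₁ p₂ v₂) (ports (glue G₁ G₂ p₁ v₁ p₂ v₂)) =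
      (rest W₁ (ports G₁)).erase p₁ ∪ (rest W₂ (ports G₂)).erase p₂ := by
  rw [← h.erase_rest_splice hW₁ hW₂ hm, ← h.symm.erase_rest_splice hW₂ hW₁ hm.symm,
    ← splice_comm hm, h.ports_glue]
  simp only [rest, union_inter_distrib_right, erase_inter]

lemma port_mem_rest_iff (hW : W₁ ⊆ G₁) : p₁ ∈ rest W₁ (ports G₁) ↔ {p₁, v₁} ∈ W₁ := by
  rw [rest, mem_inter, and_iff_right h.port₁, mem_nodes]
  constructor
  · rintro ⟨e, he, hpe⟩
    rwa [eq_of_mem_ports h.port₁ (hW he) hpe h.edge₁ (by simp)] at he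
  · exact fun he => ⟨_, he, by simp⟩

lemma edge_notMem_glue : {p₁, v₁} ∉ glue G₁ G₂ p₁ v₁ p₂ v₂ := by
  intro he
  simp only [glue, mem_union, mem_sdiff, mem_singleton, not_true_eq_false, and_false,
    false_or] at he
  rcases he with ⟨he, -⟩ | he
  · exact h.notMem_nodes_right h.port_mem_nodes (edge_subset_nodes he (by simp))
  · have : p₁ ∈ ({v₁, v₂} : Finset Node) := he ▸ by simp
    rcases mem_insert.1 this with hpv | hpv
    · exact h.port_ne hpv
    · exact h.notMem_nodes_right h.port_mem_nodes (mem_singleton.1 hpv ▸ h.symm.end_mem_nodes)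

lemma bridge_notMem : {v₁, v₂} ∉ G₁ := fun hb =>
  h.notMem_nodes_right (edge_subset_nodes hb (by simp)) h.symm.end_mem_nodes

lemma exists_splice_eq {W : Graph} (hW : W ⊆ glue G₁ G₂ p₁ v₁ p₂ v₂) :
    ∃ W₁ ⊆ G₁, ∃ W₂ ⊆ G₂, ({p₁, v₁} ∈ W₁ ↔ {p₂, v₂} ∈ W₂) ∧ W = splice W₁ W₂ p₁ v₁ p₂ v₂ := by
  have he₁ : {p₁, v₁} ∉ W := fun he => h.edge_notMem_glue (hW he)
  have he₂ : {p₂, v₂} ∉ W := fun he => h.symm.edge_notMem_glue (glue_comm G₁ G₂ .. ▸ hW he)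
  have hb₁ := h.bridge_notMem
  have hb₂ : {v₁, v₂} ∉ G₂ := pair_comm v₂ v₁ ▸ h.symm.bridge_notMem
  have hW' : ∀ e ∈ W, e ∈ G₁ ∨ e ∈ G₂ ∨ e = {v₁, v₂} := fun e he => by
    have := hW he
    simp only [glue, mem_union, mem_sdiff, mem_singleton] at this
    tauto
  by_cases hb : {v₁, v₂} ∈ W
  · refine ⟨insert {p₁, v₁} (W ∩ G₁), insert_subset h.edge₁ inter_subset_right,
      insert {p₂, v₂} (W ∩ G₂), insert_subset h.edge₂ inter_subset_right,
      iff_of_true (mem_insert_self _ _) (mem_insert_self _ _), ?_⟩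
    rw [splice, if_pos (mem_insert_self _ _)]
    ext e
    simp only [glue, mem_union, mem_sdiff, mem_insert, mem_inter, mem_singleton]
    grind
  · refine ⟨W ∩ G₁, inter_subset_right, W ∩ G₂, inter_subset_right,
      iff_of_false (fun h' => he₁ (mem_inter.1 h').1) (fun h' => he₂ (mem_inter.1 h').1), ?_⟩
    rw [splice, if_neg (fun h' => he₁ (mem_inter.1 h').1)]
    ext e
    simp only [mem_union, mem_inter]
    grind

lemma KP_glue : KP (glue G₁ G₂ p₁ v₁ p₂ v₂) = glueCells p₁ p₂ (KP G₁) (KP G₂) := by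
  ext g
  constructor
  · rintro ⟨W, hW, rfl⟩
    obtain ⟨W₁, hW₁, W₂, hW₂, hm, rfl⟩ := h.exists_splice_eq hW.1
    obtain ⟨hK₁, hK₂⟩ := (h.isKekule_splice_iff hW₁ hW₂ hm).1 hW
    exact ⟨_, ⟨W₁, hK₁, rfl⟩, _, ⟨W₂, hK₂, rfl⟩,
      by rw [h.port_mem_rest_iff hW₁, h.symm.port_mem_rest_iff hW₂, hm],
      h.rest_splice hW₁ hW₂ hm⟩
  · rintro ⟨_, ⟨W₁, hK₁, rfl⟩, _, ⟨W₂, hK₂, rfl⟩, hm, rfl⟩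
    rw [h.port_mem_rest_iff hK₁.1, h.symm.port_mem_rest_iff hK₂.1] at hm
    exact ⟨_, (h.isKekule_splice_iff hK₁.1 hK₂.1 hm).2 ⟨hK₁, hK₂⟩,
      h.rest_splice hK₁.1 hK₂.1 hm⟩

end Gluable

/-- Glueing two graphs by removing a port of each and
identifying the two incident edges yields an omniconjugated graph if and only
if both constituents are omniconjugated. -/
theorem statement19 (G' G'' : Graph) (hG' : IsGraph G') (hG'' : IsGraph G'')
    (hdisj : Disjoint (nodes G') (nodes G''))
    (h2' : 2 ≤ (ports G').card) (h2'' : 2 ≤ (ports G'').card)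
    (p' v' : Node) (hp' : p' ∈ ports G') (hpv' : ({p', v'} : Finset Node) ∈ G')
    (p'' v'' : Node) (hp'' : p'' ∈ ports G'') (hpv'' : ({p'', v''} : Finset Node) ∈ G'')
    (G : Graph)
    (hG : G = ((G' \ {({p', v'} : Finset Node)}) ∪ (G'' \ {({p'', v''} : Finset Node)})) ∪
      {({v', v''} : Finset Node)}) :
    Omniconjugated G ↔ Omniconjugated G' ∧ Omniconjugated G'' := by
  obtain rfl : G = glue G' G'' p' v' p'' v'' := hG
  have h : Gluable G' G'' p' v' p'' v'' := ⟨hG', hG'', hdisj, hp', hpv', hp'', hpv''⟩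
  have hP : Disjoint (ports G') (ports G'') := hdisj.mono ports_subset_nodes ports_subset_nodes
  have hs' : sig G' < 2 := Nat.mod_lt _ two_pos
  have hs'' : sig G'' < 2 := Nat.mod_lt _ two_pos
  rw [omniconjugated_iff h.isGraph_glue, omniconjugated_iff hG', omniconjugated_iff hG'',
    h.KP_glue, h.ports_glue, h.sig_glue]
  constructor
  · rintro ⟨-, hglue⟩
    refine ⟨⟨h2', parityCell_subset_of_subset_glueCells hP hp'' h2''
      (fun g hg => (KP_subset_parityCell hG' hg).1) (KP_subset_parityCell hG'') hglue⟩,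
      ⟨h2'', parityCell_subset_of_subset_glueCells (p₁ := p'') hP.symm hp' h2'
      (fun g hg => (KP_subset_parityCell hG'' hg).1) (KP_subset_parityCell hG') ?_⟩⟩
    rwa [glueCells_comm, union_comm, add_comm] at hglue
  · rintro ⟨⟨-, h₁⟩, -, h₂⟩
    refine ⟨?_, parityCell_subset_glueCells hp' hp'' hs' hs'' h₁ h₂⟩
    rw [card_union_of_disjoint (hP.mono (erase_subset _ _) (erase_subset _ _)),
      card_erase_of_mem hp', card_erase_of_mem hp'']
    omega
end Kekule
end
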